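/- Let B₁ ⊊ B be connected building sets on [n+1] both flag (every element of size ≥ 2 splits as a disjoint union of two elements). Then there is a chain of flag connected building sets B₁ = C₀ ⊊ C₁ ⊊ ... ⊊ C_m = B such that every element of C_{i+1} ∖ C_i decomposes by elements of C_i into exactly two parts. -/

import Mathlib

/-- A building set on a subset `X` of `[n+1]` (modeled as `Fin (n+1)`). -/
def IsBuildingSetOn {n : ℕ} (X : Finset (Fin (n + 1))) (B : Set (Finset (Fin (n + 1)))) : Prop :=
  (∀ S ∈ B, S.Nonempty ∧ S ⊆ X) ∧
  (∀ i ∈ X, ({i} : Finset (Fin (n + 1))) ∈ B) ∧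
  (∀ S₁ ∈ B, ∀ S₂ ∈ B, (S₁ ∩ S₂).Nonempty → S₁ ∪ S₂ ∈ B)

/-- `D` is a partition of `S` into pairwise disjoint nonempty members of `B₀`. -/
def IsBSPartition {n : ℕ} (B₀ : Set (Finset (Fin (n + 1)))) (S : Finset (Fin (n + 1)))
    (D : Finset (Finset (Fin (n + 1)))) : Prop :=
  (∀ T ∈ D, T ∈ B₀) ∧ (∀ T ∈ D, T.Nonempty) ∧
  (D : Set (Finset (Fin (n + 1)))).Pairwise (fun T T' => Disjoint T T') ∧
  D.sup id = S

/-- `D` is the decomposition of `S` by elements of `B₀`: a partition of `S` into members of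
`B₀` with the minimal number of parts. -/
def IsDecomposition {n : ℕ} (B₀ : Set (Finset (Fin (n + 1)))) (S : Finset (Fin (n + 1)))
    (D : Finset (Finset (Fin (n + 1)))) : Prop :=
  IsBSPartition B₀ S D ∧ ∀ D', IsBSPartition B₀ S D' → D.card ≤ D'.card

/-- `B` is connected: `[n+1] ∈ B`. -/
def IsConnectedBS {n : ℕ} (B : Set (Finset (Fin (n + 1)))) : Prop :=
  (Finset.univ : Finset (Fin (n + 1))) ∈ B

/-- `B` is flag: every member of size ≥ 2 is the disjoint union of two members. -/
def IsFlagBS {n : ℕ} (B : Set (Finset (Fin (n + 1)))) : Prop :=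
  ∀ S ∈ B, 2 ≤ S.card → ∃ S₁ ∈ B, ∃ S₂ ∈ B, Disjoint S₁ S₂ ∧ S₁ ∪ S₂ = S

/-!
Given connected flag building sets `C ⊊ B`, choose `S ∈ B \ C` that is a disjoint union `P ⊔ Q`
of two members of `C`, of maximal size among such sets. One exists because a smallest member of
`B \ C` splits in `B` into two smaller members, which must lie in `C`. If `T ∈ C` meets `S` without
being contained in it and `S ∪ T ∉ C`, then merging `T` into the part(s) it meets writes `S ∪ T`
as such a disjoint union again, against maximality. Hence `C ∪ {S}` is still a building set;
it is flag because `S = P ⊔ Q`, and `S` decomposes by `C` into exactly two parts. Induction on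
`|B \ C|` produces the chain.
-/

open Finset

variable {n : ℕ}

def IsConnectedFlagBS (C : Set (Finset (Fin (n + 1)))) : Prop :=
  IsBuildingSetOn univ C ∧ IsConnectedBS C ∧ IsFlagBS C

def IsTwoPartUnion (C : Set (Finset (Fin (n + 1)))) (S : Finset (Fin (n + 1))) : Prop :=
  ∃ P ∈ C, ∃ Q ∈ C, Disjoint P Q ∧ P ∪ Q = S

def IsTwoPartExtension (C C' : Set (Finset (Fin (n + 1)))) : Prop :=
  C ⊂ C' ∧ ∀ T ∈ C' \ C, ∀ D : Finset (Finset (Fin (n + 1))), IsDecomposition C T D → D.card = 2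

def IsTwoPartChain (Cs : ℕ → Set (Finset (Fin (n + 1)))) (m : ℕ) : Prop :=
  (∀ i ≤ m, IsConnectedFlagBS (Cs i)) ∧ ∀ i < m, IsTwoPartExtension (Cs i) (Cs (i + 1))

section

variable {B C : Set (Finset (Fin (n + 1)))} {S T : Finset (Fin (n + 1))}

theorem IsTwoPartUnion.mono {C' : Set (Finset (Fin (n + 1)))} (h : IsTwoPartUnion C S)
    (hCC' : C ⊆ C') : IsTwoPartUnion C' S :=
  let ⟨P, hP, Q, hQ, hPQ⟩ := h
  ⟨P, hCC' hP, Q, hCC' hQ, hPQ⟩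

theorem IsBuildingSetOn.two_le_card_of_notMem (hC : IsBuildingSetOn univ C) (hS : S.Nonempty)
    (hSC : S ∉ C) : 2 ≤ S.card := by
  by_contra! hlt
  obtain ⟨i, rfl⟩ := card_eq_one.mp (le_antisymm (Nat.lt_succ_iff.mp hlt) hS.card_pos)
  exact hSC (hC.2.1 i (mem_univ i))

theorem exists_isTwoPartUnion_of_mem_diff (hB : IsBuildingSetOn univ B) (hBflag : IsFlagBS B)
    (hC : IsBuildingSetOn univ C) (hS : S ∈ B \ C) : ∃ S ∈ B \ C, IsTwoPartUnion C S := by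
  obtain ⟨S, ⟨hSB, hSC⟩, hmin⟩ := exists_minimalFor_of_wellFoundedLT (· ∈ B \ C) card ⟨S, hS⟩
  have hS2 := hC.two_le_card_of_notMem (hB.1 S hSB).1 hSC
  obtain ⟨P, hPB, Q, hQB, hPQ, rfl⟩ := hBflag S hSB hS2
  have mem_of_ssubset {R : Finset (Fin (n + 1))} (hRB : R ∈ B) (hR : R ⊂ P ∪ Q) : R ∈ C := by
    by_contra hRC
    exact (card_lt_card hR).not_ge (hmin ⟨hRB, hRC⟩ (card_lt_card hR).le)
  have hPne := (hB.1 P hPB).1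
  have hQne := (hB.1 Q hQB).1
  refine ⟨P ∪ Q, ⟨hSB, hSC⟩, P, mem_of_ssubset hPB ?_, Q, mem_of_ssubset hQB ?_, hPQ, rfl⟩
  · exact left_lt_sup.2 fun h => hQne.ne_empty (hPQ.eq_bot_of_ge h)
  · exact right_lt_sup.2 fun h => hPne.ne_empty (hPQ.eq_bot_of_le h)

theorem union_mem_or_isTwoPartUnion_of_inter_left (hC : IsBuildingSetOn univ C)
    {P Q : Finset (Fin (n + 1))} (hP : P ∈ C) (hQ : Q ∈ C) (hPQ : Disjoint P Q) (hT : T ∈ C)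
    (hPT : (P ∩ T).Nonempty) : P ∪ Q ∪ T ∈ C ∨ IsTwoPartUnion C (P ∪ Q ∪ T) := by
  have hPT' : P ∪ T ∈ C := hC.2.2 P hP T hT hPT
  rw [union_right_comm]
  by_cases hQT : (Q ∩ T).Nonempty
  · refine .inl (hC.2.2 _ hPT' Q hQ (hQT.mono ?_))
    rw [inter_comm Q T]
    exact inter_subset_inter_right subset_union_right
  · rw [← not_disjoint_iff_nonempty_inter, not_not] at hQT
    exact .inr ⟨P ∪ T, hPT', Q, hQ, disjoint_union_left.2 ⟨hPQ, hQT.symm⟩, rfl⟩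

theorem IsTwoPartUnion.union_mem_or (hC : IsBuildingSetOn univ C) (hS : IsTwoPartUnion C S)
    (hT : T ∈ C) (hST : (S ∩ T).Nonempty) : S ∪ T ∈ C ∨ IsTwoPartUnion C (S ∪ T) := by
  obtain ⟨P, hP, Q, hQ, hPQ, rfl⟩ := hS
  rw [union_inter_distrib_right] at hST
  rcases union_nonempty.1 hST with hPT | hQT
  · exact union_mem_or_isTwoPartUnion_of_inter_left hC hP hQ hPQ hT hPT
  · rw [union_comm P Q]
    exact union_mem_or_isTwoPartUnion_of_inter_left hC hQ hP hPQ.symm hT hQT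

theorem exists_isTwoPartUnion_saturated (hB : IsBuildingSetOn univ B) (hBflag : IsFlagBS B)
    (hC : IsBuildingSetOn univ C) (hCB : C ⊆ B) (hS : S ∈ B \ C) :
    ∃ S ∈ B \ C, IsTwoPartUnion C S ∧ ∀ T ∈ C, (S ∩ T).Nonempty → T ⊆ S ∨ S ∪ T ∈ C := by
  obtain ⟨S, hS, hmax⟩ := (Set.toFinite {S | S ∈ B \ C ∧ IsTwoPartUnion C S}).exists_maximalFor
    card _ (exists_isTwoPartUnion_of_mem_diff hB hBflag hC hS)
  refine ⟨S, hS.1, hS.2, fun T hT hST => or_iff_not_imp_left.2 fun hTS => ?_⟩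
  have hlt : S.card < (S ∪ T).card := card_lt_card (left_lt_sup.2 hTS)
  by_contra hSTC
  have hSTB : S ∪ T ∈ B := hB.2.2 S hS.1.1 T (hCB hT) hST
  refine (hS.2.union_mem_or hC hT hST).elim hSTC fun hSTsplit => ?_
  exact hlt.not_ge (hmax ⟨⟨hSTB, hSTC⟩, hSTsplit⟩ hlt.le)

theorem IsBuildingSetOn.insert_of_subset_or_union_mem (hC : IsBuildingSetOn univ C)
    (hS : S.Nonempty) (hsat : ∀ T ∈ C, (S ∩ T).Nonempty → T ⊆ S ∨ S ∪ T ∈ C) :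
    IsBuildingSetOn univ (insert S C) := by
  have union_mem {T} (hT : T ∈ C) (hST : (S ∩ T).Nonempty) : S ∪ T ∈ insert S C := by
    rcases hsat T hT hST with hTS | hSTC
    · rw [union_eq_left.2 hTS]; exact Set.mem_insert S C
    · exact Set.mem_insert_of_mem S hSTC
  refine ⟨?_, fun i hi => Set.mem_insert_of_mem S (hC.2.1 i hi), ?_⟩
  · rintro T (rfl | hT)
    · exact ⟨hS, subset_univ T⟩
    · exact hC.1 T hT
  · rintro T₁ (rfl | h₁) T₂ (rfl | h₂) hT
    · rw [union_self]; exact Set.mem_insert _ C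
    · exact union_mem h₂ hT
    · rw [union_comm]; exact union_mem h₁ (by rwa [inter_comm])
    · exact Set.mem_insert_of_mem S (hC.2.2 T₁ h₁ T₂ h₂ hT)

theorem IsFlagBS.insert (hC : IsFlagBS C) (hS : IsTwoPartUnion C S) :
    IsFlagBS (insert S C) := by
  rintro T (rfl | hT) hT2
  · exact hS.mono (Set.subset_insert T C)
  · exact IsTwoPartUnion.mono (hC T hT hT2) (Set.subset_insert S C)

theorem IsDecomposition.card_eq_two (hCne : ∀ P ∈ C, P.Nonempty) (hSC : S ∉ C)
    (hS : IsTwoPartUnion C S) {D : Finset (Finset (Fin (n + 1)))} (hD : IsDecomposition C S D) :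
    D.card = 2 := by
  obtain ⟨P, hP, Q, hQ, hPQ, rfl⟩ := hS
  have hPQne : P ≠ Q := fun h => (hCne P hP).ne_empty (disjoint_self.1 (h ▸ hPQ))
  have hpair : IsBSPartition C (P ∪ Q) {P, Q} := by
    refine ⟨by simp [hP, hQ], by simp [hCne P hP, hCne Q hQ], ?_, by simp⟩
    rw [coe_pair, Set.pairwise_pair]
    exact fun _ => ⟨hPQ, hPQ.symm⟩
  have hle : D.card ≤ 2 := card_pair hPQne ▸ hD.2 _ hpair
  obtain ⟨⟨hDC, -, -, hDsup⟩, -⟩ := hD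
  have hD0 : D.card ≠ 0 := by
    rw [Ne, card_eq_zero]
    rintro rfl
    rw [sup_empty, bot_eq_empty] at hDsup
    exact (hCne P hP).ne_empty (union_eq_empty.1 hDsup.symm).1
  have hD1 : D.card ≠ 1 := by
    rw [Ne, card_eq_one]
    rintro ⟨T, rfl⟩
    rw [sup_singleton, id] at hDsup
    exact hSC (hDsup ▸ hDC T (mem_singleton_self T))
  omega

theorem isTwoPartExtension_insert (hCne : ∀ P ∈ C, P.Nonempty) (hSC : S ∉ C)
    (hS : IsTwoPartUnion C S) : IsTwoPartExtension C (insert S C) := by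
  refine ⟨Set.ssubset_insert hSC, fun T hT D hD => ?_⟩
  obtain rfl : T = S := (Set.mem_insert_iff.1 hT.1).resolve_right hT.2
  exact hD.card_eq_two hCne hSC hS

theorem IsTwoPartChain.cons {Cs : ℕ → Set (Finset (Fin (n + 1)))} {m : ℕ}
    (hC : IsConnectedFlagBS C) (hstep : IsTwoPartExtension C (Cs 0)) (h : IsTwoPartChain Cs m) :
    IsTwoPartChain (fun i => Nat.casesOn i C Cs) (m + 1) := by
  refine ⟨fun i hi => ?_, fun i hi => ?_⟩
  · cases i with
    | zero => exact hC
    | succ i => exact h.1 i (by omega)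
  · cases i with
    | zero => exact hstep
    | succ i => exact h.2 i (by omega)

end

theorem exists_isTwoPartChain {B C : Set (Finset (Fin (n + 1)))} (hB : IsBuildingSetOn univ B)
    (hBflag : IsFlagBS B) (hC : IsConnectedFlagBS C) (hCB : C ⊆ B) :
    ∃ (m : ℕ) (Cs : ℕ → Set (Finset (Fin (n + 1)))), Cs 0 = C ∧ Cs m = B ∧ IsTwoPartChain Cs m := by
  by_cases hBC : B ⊆ C
  · exact ⟨0, fun _ => C, rfl, hCB.antisymm hBC, fun _ _ => hC, fun _ hi => absurd hi (by omega)⟩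
  obtain ⟨S₀, hS₀⟩ := Set.not_subset.1 hBC
  obtain ⟨S, hS, hSsplit, hsat⟩ := exists_isTwoPartUnion_saturated hB hBflag hC.1 hCB hS₀
  have hCne : ∀ P ∈ C, P.Nonempty := fun P hP => (hC.1.1 P hP).1
  have hC' : IsConnectedFlagBS (insert S C) :=
    ⟨hC.1.insert_of_subset_or_union_mem (hB.1 S hS.1).1 hsat, Set.mem_insert_of_mem S hC.2.1,
      hC.2.2.insert hSsplit⟩
  have hdecr : (B \ insert S C).ncard < (B \ C).ncard :=
    Set.ncard_lt_ncard <| (Set.ssubset_iff_of_subset (Set.sdiff_subset_sdiff_right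
      (Set.subset_insert S C))).2 ⟨S, hS, fun h => h.2 (Set.mem_insert S C)⟩
  obtain ⟨m, Cs, h0, hm, hchain⟩ :=
    exists_isTwoPartChain hB hBflag hC' (Set.insert_subset hS.1 hCB)
  exact ⟨m + 1, _, rfl, hm, hchain.cons hC (h0 ▸ isTwoPartExtension_insert hCne hS.2 hSsplit)⟩
termination_by (B \ C).ncard

theorem stmt17_general {n : ℕ} (B B₁ : Set (Finset (Fin (n + 1))))
    (hB : IsBuildingSetOn Finset.univ B) (hBflag : IsFlagBS B)
    (hB₁ : IsBuildingSetOn Finset.univ B₁) (hB₁conn : IsConnectedBS B₁)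
    (hB₁flag : IsFlagBS B₁) (hsub : B₁ ⊂ B) :
    ∃ (m : ℕ) (C : ℕ → Set (Finset (Fin (n + 1)))),
      C 0 = B₁ ∧ C m = B ∧
      (∀ i ≤ m, IsBuildingSetOn Finset.univ (C i) ∧ IsConnectedBS (C i) ∧ IsFlagBS (C i)) ∧
      ∀ i < m, C i ⊂ C (i + 1) ∧
        ∀ T ∈ C (i + 1) \ C i,
          ∀ D : Finset (Finset (Fin (n + 1))), IsDecomposition (C i) T D → D.card = 2 := by
  obtain ⟨m, C, h0, hm, hconnflag, hstep⟩ :=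
    exists_isTwoPartChain hB hBflag ⟨hB₁, hB₁conn, hB₁flag⟩ hsub.1
  exact ⟨m, C, h0, hm, hconnflag, hstep⟩

/-- If `B₁ ⊊ B` are connected flag building sets on `[n+1]`, there is a chain of flag
connected building sets `B₁ = C₀ ⊊ C₁ ⊊ … ⊊ C_m = B` such that every element of
`C_{i+1} ∖ C_i` decomposes by elements of `C_i` into exactly two parts. -/
theorem stmt17 {n : ℕ} (B B₁ : Set (Finset (Fin (n + 1))))
    (hB : IsBuildingSetOn Finset.univ B) (hBconn : IsConnectedBS B) (hBflag : IsFlagBS B)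
    (hB₁ : IsBuildingSetOn Finset.univ B₁) (hB₁conn : IsConnectedBS B₁)
    (hB₁flag : IsFlagBS B₁) (hsub : B₁ ⊂ B) :
    ∃ (m : ℕ) (C : ℕ → Set (Finset (Fin (n + 1)))),
      C 0 = B₁ ∧ C m = B ∧
      (∀ i ≤ m, IsBuildingSetOn Finset.univ (C i) ∧ IsConnectedBS (C i) ∧ IsFlagBS (C i)) ∧
      ∀ i < m, C i ⊂ C (i + 1) ∧
        ∀ T ∈ C (i + 1) \ C i,
          ∀ D : Finset (Finset (Fin (n + 1))), IsDecomposition (C i) T D → D.card = 2 :=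
  stmt17_general B B₁ hB hBflag hB₁ hB₁conn hB₁flag hsub
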